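/- For every odd integer k ≥ 3 and every α ∈ (0,1), the integrals I_{k,α} := ∫₀^{π/2} sin(kθ)/(sin θ)^{2α} dθ satisfy the recurrence (k/2 - α) I_{k,α} = (k/2 - 1 + α) I_{k-2,α}. -/

import Mathlib

/-! With `F(θ) = sin ((k - 1) θ) · (sin θ)^(1 - 2α)`, the addition formulas for
`sin (kθ)` and `sin ((k - 2) θ)` give
`F' = (k/2 - α) sin (kθ) / (sin θ)^(2α) - (k/2 - 1 + α) sin ((k - 2) θ) / (sin θ)^(2α)`,
so the difference of the two sides of the recurrence is `F(π/2) - F(0⁺)`.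
Both vanish: `F(π/2) = sin ((k - 1) π/2) = 0` because `k` is odd, and `F(θ) = O(θ^(2 - 2α))`
near `0` because `α < 1`. -/

open Real Set Filter Topology MeasureTheory intervalIntegral

/-- On `(0, π/2]` we have `(2/π) θ ≤ sin θ`, so the integrand is `O(θ^(1 - 2α))`. -/
theorem intervalIntegrable_sin_mul_div_sin_rpow (c : ℝ) {α : ℝ} (hα0 : 0 ≤ α) (hα1 : α < 1) :
    IntervalIntegrable (fun θ => sin (c * θ) / sin θ ^ (2 * α)) volume 0 (π / 2) := by
  have hπ := pi_pos
  have hdom : IntervalIntegrable (fun θ : ℝ => |c| * (π / 2) ^ (2 * α) * θ ^ (1 - 2 * α))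
      volume 0 (π / 2) := (intervalIntegrable_rpow' (by linarith)).const_mul _
  refine hdom.mono_fun' (Measurable.aestronglyMeasurable (by fun_prop)) ?_
  rw [EventuallyLE, ae_restrict_iff' measurableSet_uIoc]
  refine Eventually.of_forall fun θ hθ => ?_
  rw [uIoc_of_le (by positivity)] at hθ
  obtain ⟨hθ0, hθπ⟩ := hθ
  have hsin_ge : 2 / π * θ ≤ sin θ := mul_le_sin hθ0.le hθπ
  have hnum : |sin (c * θ)| ≤ |c| * θ :=
    abs_sin_le_abs.trans_eq (by rw [abs_mul, abs_of_pos hθ0])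
  have hden : (2 / π) ^ (2 * α) * θ ^ (2 * α) ≤ sin θ ^ (2 * α) := by
    rw [← mul_rpow (by positivity) hθ0.le]
    exact rpow_le_rpow (by positivity) hsin_ge (by positivity)
  calc ‖sin (c * θ) / sin θ ^ (2 * α)‖
      = |sin (c * θ)| / sin θ ^ (2 * α) := by
        have hsin : 0 < sin θ := (by positivity : 0 < 2 / π * θ).trans_le hsin_ge
        rw [norm_div, norm_eq_abs, norm_eq_abs, abs_of_pos (rpow_pos_of_pos hsin _)]
    _ ≤ |c| * θ / ((2 / π) ^ (2 * α) * θ ^ (2 * α)) :=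
        div_le_div₀ (by positivity) hnum (by positivity) hden
    _ = |c| * (π / 2) ^ (2 * α) * θ ^ (1 - 2 * α) := by
        rw [rpow_sub hθ0, rpow_one, show π / 2 = (2 / π)⁻¹ from (inv_div _ _).symm,
          inv_rpow (by positivity)]
        field_simp

theorem hasDerivAt_sin_mul_mul_sin_rpow (c α : ℝ) {θ : ℝ} (hθ : 0 < sin θ) :
    HasDerivAt (fun t => sin ((c - 1) * t) * sin t ^ (1 - 2 * α))
      ((c / 2 - α) * (sin (c * θ) / sin θ ^ (2 * α)) -
        (c / 2 - 1 + α) * (sin ((c - 2) * θ) / sin θ ^ (2 * α))) θ := by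
  have hsin : HasDerivAt (fun t => sin ((c - 1) * t)) (cos ((c - 1) * θ) * (c - 1)) θ := by
    simpa using ((hasDerivAt_id θ).const_mul (c - 1)).sin
  have hpow : HasDerivAt (fun t => sin t ^ (1 - 2 * α))
      (cos θ * (1 - 2 * α) * sin θ ^ (1 - 2 * α - 1)) θ :=
    (hasDerivAt_sin θ).rpow_const (Or.inl hθ.ne')
  refine (hsin.mul hpow).congr_deriv ?_
  have hadd : sin (c * θ) = sin ((c - 1) * θ) * cos θ + cos ((c - 1) * θ) * sin θ := by
    rw [← sin_add]; ring_nf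
  have hsub : sin ((c - 2) * θ) = sin ((c - 1) * θ) * cos θ - cos ((c - 1) * θ) * sin θ := by
    rw [← sin_sub]; ring_nf
  have hpos : 0 < sin θ ^ (2 * α) := rpow_pos_of_pos hθ _
  rw [hadd, hsub, rpow_sub hθ, rpow_one, show 1 - 2 * α - 1 = 0 - 2 * α by ring, rpow_sub hθ,
    rpow_zero]
  field_simp
  ring

/-- Near `0`, `|sin (c t)| ≤ |c| t ≤ |c| (π/2) sin t`, so the product is `O((sin t)^(2 - 2α))`. -/
theorem tendsto_sin_mul_mul_sin_rpow_nhdsGT_zero (c : ℝ) {α : ℝ} (hα1 : α < 1) :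
    Tendsto (fun t => sin (c * t) * sin t ^ (1 - 2 * α)) (𝓝[>] 0) (𝓝 0) := by
  have hπ := pi_pos
  have hcont : Continuous fun t => sin t ^ (2 - 2 * α) :=
    continuous_sin.rpow_const fun _ => Or.inr (by linarith)
  have hlim : Tendsto (fun t => |c| * (π / 2) * sin t ^ (2 - 2 * α)) (𝓝[>] 0) (𝓝 0) := by
    have h0 : Tendsto (fun t => sin t ^ (2 - 2 * α)) (𝓝[>] 0) (𝓝 0) := by
      simpa [zero_rpow (show 2 - 2 * α ≠ 0 by linarith)] using
        tendsto_nhdsWithin_of_tendsto_nhds (hcont.tendsto 0)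
    simpa using h0.const_mul (|c| * (π / 2))
  refine squeeze_zero_norm' ?_ hlim
  filter_upwards [Ioo_mem_nhdsGT (show (0 : ℝ) < π / 2 by positivity)] with t ht
  have hsin : 0 < sin t := sin_pos_of_pos_of_lt_pi ht.1 (by linarith [ht.2])
  have hnum : |sin (c * t)| ≤ |c| * (π / 2) * sin t := by
    have := mul_le_sin ht.1.le ht.2.le
    calc |sin (c * t)| ≤ |c| * t := abs_sin_le_abs.trans_eq (by rw [abs_mul, abs_of_pos ht.1])
      _ ≤ |c| * (π / 2) * sin t := by
        rw [mul_assoc]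
        gcongr
        rw [div_mul_eq_mul_div, div_le_iff₀ hπ] at this
        linarith
  calc ‖sin (c * t) * sin t ^ (1 - 2 * α)‖ = |sin (c * t)| * sin t ^ (1 - 2 * α) := by
        rw [norm_mul, norm_eq_abs, norm_eq_abs, abs_of_pos (rpow_pos_of_pos hsin _)]
    _ ≤ |c| * (π / 2) * sin t * sin t ^ (1 - 2 * α) := by gcongr
    _ = |c| * (π / 2) * sin t ^ (2 - 2 * α) := by
        rw [mul_assoc _ (sin t), ← rpow_one_add' hsin.le (by linarith)]
        ring_nf

theorem tendsto_sin_mul_mul_sin_rpow_nhdsLT_pi_div_two {c : ℝ} (hc : sin (c * (π / 2)) = 0)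
    (α : ℝ) : Tendsto (fun t => sin (c * t) * sin t ^ (1 - 2 * α)) (𝓝[<] (π / 2)) (𝓝 0) := by
  have hcont : ContinuousAt (fun t => sin (c * t) * sin t ^ (1 - 2 * α)) (π / 2) :=
    (by fun_prop : Continuous fun t => sin (c * t)).continuousAt.mul
      (continuous_sin.continuousAt.rpow_const (Or.inl (by simp)))
  simpa [hc] using tendsto_nhdsWithin_of_tendsto_nhds hcont.tendsto

theorem I_k_alpha_recurrence (k : ℕ) (hk : Odd k) (α : ℝ)
    (hα0 : 0 < α) (hα1 : α < 1) :
    ((k : ℝ) / 2 - α) * ∫ θ in (0:ℝ)..(π/2), Real.sin (k * θ) / Real.sin θ ^ (2 * α) =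
      ((k : ℝ) / 2 - 1 + α) *
        ∫ θ in (0:ℝ)..(π/2), Real.sin ((k - 2 : ℝ) * θ) / Real.sin θ ^ (2 * α) := by
  have hπ := pi_pos
  have hI := intervalIntegrable_sin_mul_div_sin_rpow (k : ℝ) hα0.le hα1
  have hI' := intervalIntegrable_sin_mul_div_sin_rpow ((k : ℝ) - 2) hα0.le hα1
  have hend : sin (((k : ℝ) - 1) * (π / 2)) = 0 := by
    obtain ⟨n, rfl⟩ := hk
    convert sin_nat_mul_pi n using 2
    push_cast
    ring
  have hftc := integral_eq_sub_of_hasDerivAt_of_tendsto (by positivity)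
    (fun θ hθ => hasDerivAt_sin_mul_mul_sin_rpow (k : ℝ) α
      (sin_pos_of_pos_of_lt_pi hθ.1 (by linarith [hθ.2])))
    ((hI.const_mul _).sub (hI'.const_mul _))
    (tendsto_sin_mul_mul_sin_rpow_nhdsGT_zero _ hα1)
    (tendsto_sin_mul_mul_sin_rpow_nhdsLT_pi_div_two hend α)
  rw [integral_sub (hI.const_mul _) (hI'.const_mul _), intervalIntegral.integral_const_mul,
    intervalIntegral.integral_const_mul,
    sub_zero, sub_eq_zero] at hftc
  exact hftc
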